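/- arXiv:0902.1339 — 6 statements merged into one kernel-verified Lean document; each statement's English description precedes it below -/
import Mathlib

section
/- For every partition λ, with d the Durfee rank of λ, the identity (s - s^{-1})·C_λ(s²) = Σ_{i=1}^{d} ( s^{2(λ_i - i)+1} - s^{-2(λ'_i - i)-1} ) holds in the ring ℤ[s, s^{-1}] of Laurent polynomials with integer coefficients, where C_λ(s²) denotes the content polynomial of λ evaluated at t = s², i.e. Σ_{(i,j) ∈ λ} s^{2(j-i)}. -/
open LaurentPolynomial

/-- A partition, identified with its Young diagram: an antitone, eventually zero
sequence of parts.  In 0-indexed terms, `parts i` is the (i+1)-st part `λ_{i+1}`,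
and the cells of the Young diagram are the pairs `(i, j)` with `j < parts i`. -/
structure YPartition where
  parts : ℕ → ℕ
  antitone' : Antitone parts
  eventually_zero : ∃ N, ∀ n, N ≤ n → parts n = 0

/-- The content polynomial of the partition `p`, evaluated at `s^k`:
`∑_{(i,j) ∈ p} s^{k (j - i)}`, as a Laurent polynomial over `R`.
(Taking `k = 2` gives `C_p(s²)`.) -/
noncomputable def contentPoly (R : Type*) [CommSemiring R] (p : YPartition) (k : ℤ) :
    LaurentPolynomial R :=
  ∑ᶠ i : ℕ, ∑ j ∈ Finset.range (p.parts i), T (k * ((j : ℤ) - (i : ℤ)))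

/-- The Durfee rank of a partition: the number of (1-indexed) indices `i` with `λ_i ≥ i`,
i.e. (0-indexed) the number of `i` with `parts i > i`. -/
noncomputable def durfee (p : YPartition) : ℕ := Set.ncard {i : ℕ | i < p.parts i}

/-- The conjugate partition: (0-indexed) `conj p j = #{i : parts i > j}`, which is the
(j+1)-st part `λ'_{j+1}` of the transposed Young diagram. -/
noncomputable def conj (p : YPartition) (j : ℕ) : ℕ := Set.ncard {i : ℕ | j < p.parts i}

lemma downclosed_eq_range (S : Finset ℕ) (h : ∀ a b : ℕ, a ≤ b → b ∈ S → a ∈ S) :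
    S = Finset.range S.card := by
  have hsub : S ⊆ Finset.range S.card := by
    intro b hb
    have hss : Finset.range (b + 1) ⊆ S := by
      intro a ha
      exact h a b (Nat.lt_succ_iff.mp (Finset.mem_range.mp ha)) hb
    have := Finset.card_le_card hss
    simpa [Finset.mem_range, Finset.card_range] using this
  exact Finset.eq_of_subset_of_card_le hsub (by simp)

lemma telescope (i : ℤ) (m : ℕ) :
    ((T 1 - T (-1)) : LaurentPolynomial ℤ) * ∑ j ∈ Finset.range m, T (2 * ((j : ℤ) - i)) =
      T (2 * ((m : ℤ) - i) - 1) - T (-2 * i - 1) := by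
  induction m with
  | zero => simp
  | succ n ih =>
    rw [Finset.sum_range_succ, mul_add, ih]
    rw [sub_mul, ← T_add, ← T_add]
    push_cast
    ring_nf

lemma T_congr {a b : ℤ} (h : a = b) : (T a : LaurentPolynomial ℤ) = T b := by rw [h]

lemma hfin (p : YPartition) (k : ℕ) : {i : ℕ | k < p.parts i}.Finite := by
  obtain ⟨N, hN⟩ := p.eventually_zero
  apply Set.Finite.subset (Set.finite_Iio N)
  intro i hi
  simp only [Set.mem_setOf_eq] at hi
  simp only [Set.mem_Iio]
  by_contra hc
  have := hN i (by omega)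
  omega

lemma conj_iff (p : YPartition) (k i : ℕ) : i < conj p k ↔ k < p.parts i := by
  have hf := hfin p k
  have hcard : conj p k = hf.toFinset.card := Set.ncard_eq_toFinset_card _ hf
  have hdc : hf.toFinset = Finset.range hf.toFinset.card := by
    apply downclosed_eq_range
    intro a b hab hb
    simp only [Set.Finite.mem_toFinset, Set.mem_setOf_eq] at *
    exact lt_of_lt_of_le hb (p.antitone' hab)
  constructor
  · intro h
    have : i ∈ hf.toFinset := by rw [hdc]; exact Finset.mem_range.mpr (by omega)
    simpa using this
  · intro h
    have : i ∈ hf.toFinset := by simpa using h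
    rw [hdc] at this
    have := Finset.mem_range.mp this
    omega

lemma durfee_iff (p : YPartition) (i : ℕ) : i < durfee p ↔ i < p.parts i := by
  have hf : {i : ℕ | i < p.parts i}.Finite := by
    apply Set.Finite.subset (hfin p 0)
    intro j hj
    simp only [Set.mem_setOf_eq] at *
    omega
  have hcard : durfee p = hf.toFinset.card := Set.ncard_eq_toFinset_card _ hf
  have hdc : hf.toFinset = Finset.range hf.toFinset.card := by
    apply downclosed_eq_range
    intro a b hab hb
    simp only [Set.Finite.mem_toFinset, Set.mem_setOf_eq] at *
    have := p.antitone' hab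
    omega
  constructor
  · intro h
    have : i ∈ hf.toFinset := by rw [hdc]; exact Finset.mem_range.mpr (by omega)
    simpa using this
  · intro h
    have : i ∈ hf.toFinset := by simpa using h
    rw [hdc] at this
    have := Finset.mem_range.mp this
    omega

/-- With `d` the Durfee rank of `λ`, one has
`(s - s⁻¹) · C_λ(s²) = ∑_{i=1}^{d} (s^{2(λ_i - i) + 1} - s^{-2(λ'_i - i) - 1})`
in `ℤ[s, s⁻¹]`.  The summation index `k` runs 0-indexed over `0, …, d-1`,
corresponding to the 1-indexed `i = k + 1`, so `λ_i = parts k` and `λ'_i = conj p k`. -/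
theorem sub_mul_contentPoly_sq_eq_sum_frobenius (p : YPartition) :
    ((T 1 - T (-1)) : LaurentPolynomial ℤ) * contentPoly ℤ p 2 =
      ∑ k ∈ Finset.range (durfee p),
        ((T (2 * ((p.parts k : ℤ) - ((k : ℤ) + 1)) + 1) : LaurentPolynomial ℤ)
          - T (-(2 * ((conj p k : ℤ) - ((k : ℤ) + 1)) + 1))) := by
  set d := durfee p with hd
  set r := conj p 0 with hr
  have hpos : ∀ i, i < r ↔ 0 < p.parts i := fun i => conj_iff p 0 i
  have hdur : ∀ i, i < d ↔ i < p.parts i := fun i => durfee_iff p i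
  have hdr : d ≤ r := by
    by_contra hc
    have h1 : r < p.parts r := (hdur r).mp (by omega)
    have h2 : r < r := (hpos r).mpr (by omega)
    omega
  have hconj_anti : ∀ k k' : ℕ, k ≤ k' → conj p k' ≤ conj p k := by
    intro k k' h
    exact Set.ncard_le_ncard (fun i hi => lt_of_le_of_lt h hi) (hfin p k)
  -- rewrite contentPoly as a finite sum
  have hcp : contentPoly ℤ p 2 =
      ∑ i ∈ Finset.range r, ∑ j ∈ Finset.range (p.parts i), T (2 * ((j : ℤ) - (i : ℤ))) := by
    apply finsum_eq_sum_of_support_subset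
    intro i hi
    simp only [Function.mem_support] at hi
    simp only [Finset.coe_range, Set.mem_Iio]
    rw [hpos i]
    by_contra hc
    have : p.parts i = 0 := by omega
    simp [this] at hi
  rw [hcp, Finset.mul_sum]
  have hterm : ∀ i ∈ Finset.range r,
      ((T 1 - T (-1)) : LaurentPolynomial ℤ) *
        ∑ j ∈ Finset.range (p.parts i), T (2 * ((j : ℤ) - (i : ℤ))) =
      T (2 * ((p.parts i : ℤ) - (i : ℤ)) - 1) - T (-2 * (i : ℤ) - 1) :=
    fun i _ => telescope (i : ℤ) (p.parts i)
  rw [Finset.sum_congr rfl hterm, Finset.sum_sub_distrib]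
  -- split the first sum
  have hsplit : ∑ i ∈ Finset.range r, (T (2 * ((p.parts i : ℤ) - (i : ℤ)) - 1) : LaurentPolynomial ℤ)
      = ∑ i ∈ Finset.range d, T (2 * ((p.parts i : ℤ) - (i : ℤ)) - 1)
        + ∑ i ∈ Finset.Ico d r, T (2 * ((p.parts i : ℤ) - (i : ℤ)) - 1) := by
    rw [Finset.range_eq_Ico, Finset.range_eq_Ico]
    exact (Finset.sum_Ico_consecutive (fun i => (T (2 * ((p.parts i : ℤ) - (i : ℤ)) - 1) : LaurentPolynomial ℤ)) (Nat.zero_le d) hdr).symm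
  -- the key combinatorial identity
  set F : ℤ → LaurentPolynomial ℤ := fun x => T (-2 * x - 1) with hF
  set f : ℕ → ℤ := fun i => (i : ℤ) - p.parts i with hf
  set g : ℕ → ℤ := fun k => (conj p k : ℤ) - k - 1 with hg
  set A : Finset ℤ := (Finset.Ico d r).image f with hA
  set B : Finset ℤ := (Finset.range d).image g with hB
  have hfInj : ∀ a ∈ Finset.Ico d r, ∀ b ∈ Finset.Ico d r, f a = f b → a = b := by
    intro a ha b hb hab
    simp only [hf] at hab
    rcases Nat.lt_trichotomy a b with h | h | h
    · have := p.antitone' h.le; omega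
    · exact h
    · have := p.antitone' h.le; omega
  have hgInj : ∀ a ∈ Finset.range d, ∀ b ∈ Finset.range d, g a = g b → a = b := by
    intro a ha b hb hab
    simp only [hg] at hab
    rcases Nat.lt_trichotomy a b with h | h | h
    · have := hconj_anti a b h.le; omega
    · exact h
    · have := hconj_anti b a h.le; omega
  have hdisj : Disjoint A B := by
    rw [Finset.disjoint_left]
    intro x hxA hxB
    obtain ⟨i, hi, rfl⟩ := Finset.mem_image.mp hxA
    obtain ⟨k, hk, hgk⟩ := Finset.mem_image.mp hxB
    simp only [Finset.mem_Ico] at hi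
    simp only [Finset.mem_range] at hk
    simp only [hf, hg] at hgk
    by_cases hcase : k < p.parts i
    · have h1 : i < conj p k := (conj_iff p k i).mpr hcase
      omega
    · have h1 : ¬ i < conj p k := fun h => hcase ((conj_iff p k i).mp h)
      omega
  have hsub : A ∪ B ⊆ (Finset.range r).image (fun n : ℕ => (n : ℤ)) := by
    intro x hx
    rcases Finset.mem_union.mp hx with h | h
    · obtain ⟨i, hi, rfl⟩ := Finset.mem_image.mp h
      simp only [Finset.mem_Ico] at hi
      have h1 : ¬ i < p.parts i := fun hh => absurd ((hdur i).mpr hh) (by omega)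
      have h2 : 0 < p.parts i := (hpos i).mp hi.2
      refine Finset.mem_image.mpr ⟨(f i).toNat, Finset.mem_range.mpr ?_, ?_⟩
      · simp only [hf]; omega
      · simp only [hf]; omega
    · obtain ⟨k, hk, rfl⟩ := Finset.mem_image.mp h
      simp only [Finset.mem_range] at hk
      have h1 : k < p.parts k := (hdur k).mp hk
      have h2 : k < conj p k := (conj_iff p k k).mpr h1
      have h3 : conj p k ≤ r := hconj_anti 0 k (Nat.zero_le k)
      refine Finset.mem_image.mpr ⟨(g k).toNat, Finset.mem_range.mpr ?_, ?_⟩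
      · simp only [hg]; omega
      · simp only [hg]; omega
  have hcardA : A.card = r - d := by
    rw [hA, Finset.card_image_of_injOn hfInj, Nat.card_Ico]
  have hcardB : B.card = d := by
    rw [hB, Finset.card_image_of_injOn hgInj, Finset.card_range]
  have hcardU : ((Finset.range r).image (fun n : ℕ => (n : ℤ))).card ≤ (A ∪ B).card := by
    rw [Finset.card_union_of_disjoint hdisj, hcardA, hcardB,
      Finset.card_image_of_injective _ (fun a b => by omega), Finset.card_range]
    omega
  have hunion : A ∪ B = (Finset.range r).image (fun n : ℕ => (n : ℤ)) :=
    Finset.eq_of_subset_of_card_le hsub hcardU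
  have key : ∑ i ∈ Finset.range r, (T (-2 * (i : ℤ) - 1) : LaurentPolynomial ℤ)
      = ∑ i ∈ Finset.Ico d r, T (2 * ((p.parts i : ℤ) - (i : ℤ)) - 1)
        + ∑ k ∈ Finset.range d, T (-(2 * ((conj p k : ℤ) - ((k : ℤ) + 1)) + 1)) := by
    have e1 : ∑ i ∈ Finset.range r, (T (-2 * (i : ℤ) - 1) : LaurentPolynomial ℤ)
        = ∑ x ∈ (Finset.range r).image (fun n : ℕ => (n : ℤ)), F x := by
      rw [Finset.sum_image (fun a _ b _ h => by omega)]
    rw [e1, ← hunion, Finset.sum_union hdisj, hA, hB,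
      Finset.sum_image hfInj, Finset.sum_image hgInj]
    congr 1
    · exact Finset.sum_congr rfl fun i _ => T_congr (by simp only [hF, hf]; ring)
    · exact Finset.sum_congr rfl fun k _ => T_congr (by simp only [hF, hg]; ring)
  rw [hsplit, key]
  rw [Finset.sum_sub_distrib]
  have e2 : ∀ k ∈ Finset.range d,
      (T (2 * ((p.parts k : ℤ) - (k : ℤ)) - 1) : LaurentPolynomial ℤ)
        = T (2 * ((p.parts k : ℤ) - ((k : ℤ) + 1)) + 1) :=
    fun k _ => T_congr (by ring)
  rw [Finset.sum_congr rfl e2]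
  abel
end

section
/- The map sending a partition λ to the Laurent polynomial (s - s^{-1})·C_λ(s²) in the ring of Laurent polynomials in s over ℤ/2ℤ is injective: if λ and μ are partitions with (s - s^{-1})·C_λ(s²) = (s - s^{-1})·C_μ(s²) in (ℤ/2ℤ)[s, s^{-1}], then λ = μ. -/
open LaurentPolynomial

open scoped Classical

/-- beta sequence -/
def dseq (p : YPartition) (i : ℕ) : ℤ := (p.parts i : ℤ) - i

lemma dseq_strictAnti (p : YPartition) : StrictAnti (dseq p) := by
  apply strictAnti_nat_of_succ_lt
  intro n
  have h2 : p.parts (n + 1) ≤ p.parts n := p.antitone' (Nat.le_succ n)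
  unfold dseq
  push_cast
  omega

lemma strictAnti_range_eq {f g : ℕ → ℤ} (hf : StrictAnti f) (hg : StrictAnti g)
    (h : Set.range f = Set.range g) : f = g := by
  funext n
  induction n using Nat.strong_induction_on with
  | _ n ih =>
    have h1 : f n ∈ Set.range g := h ▸ Set.mem_range_self n
    obtain ⟨m, hm⟩ := h1
    have h2 : g n ∈ Set.range f := h.symm ▸ Set.mem_range_self n
    obtain ⟨m', hm'⟩ := h2
    have hmn : n ≤ m := by
      by_contra hc
      push_neg at hc
      have h3 := ih m hc
      have h4 : f n < f m := hf hc
      omega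
    have hmn' : n ≤ m' := by
      by_contra hc
      push_neg at hc
      have h3 := ih m' hc
      have h4 : g n < g m' := hg hc
      omega
    have e1 : f n ≤ g n := hm ▸ hg.antitone hmn
    have e2 : g n ≤ f n := hm' ▸ hf.antitone hmn'
    omega

lemma key (p : YPartition) :
    ((T 1 - T (-1)) : LaurentPolynomial (ZMod 2)) * contentPoly (ZMod 2) p 2
      = ∑ᶠ i : ℕ, ((T (2 * dseq p i - 1) : LaurentPolynomial (ZMod 2))
          - T (-2 * (i : ℤ) - 1)) := by
  obtain ⟨N, hN⟩ := p.eventually_zero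
  have hsupp : (Function.support fun i : ℕ =>
      ∑ j ∈ Finset.range (p.parts i), (T (2 * ((j : ℤ) - (i : ℤ))) : LaurentPolynomial (ZMod 2))).Finite := by
    apply Set.Finite.subset (Set.finite_Iio N)
    intro i hi
    simp only [Function.mem_support] at hi
    by_contra hc
    simp only [Set.mem_Iio, not_lt] at hc
    rw [hN i hc] at hi
    simp at hi
  rw [contentPoly, mul_finsum' _ _ hsupp]
  apply finsum_congr
  intro i
  rw [Finset.mul_sum]
  have step : ∀ j ∈ Finset.range (p.parts i),
      ((T 1 - T (-1)) : LaurentPolynomial (ZMod 2)) * T (2 * ((j : ℤ) - (i : ℤ)))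
        = T (2 * ((j : ℤ) + 1) - 2 * (i : ℤ) - 1) - T (2 * (j : ℤ) - 2 * (i : ℤ) - 1) := by
    intro j _
    rw [sub_mul, ← T_add, ← T_add]
    ring_nf
  rw [Finset.sum_congr rfl step]
  have tel := Finset.sum_range_sub
    (fun j : ℕ => (T (2 * (j : ℤ) - 2 * (i : ℤ) - 1) : LaurentPolynomial (ZMod 2)))
    (p.parts i)
  simp only [Nat.cast_add, Nat.cast_one] at tel ⊢
  rw [tel]
  congr 2
  · unfold dseq
    ring
  · push_cast
    ring

lemma ind_support_finite (e : ℕ → ℤ) (he : Function.Injective e) (n : ℤ) :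
    (Function.support fun i : ℕ => if e i = n then (1 : ZMod 2) else 0).Finite := by
  apply Set.Subsingleton.finite
  intro a ha b hb
  simp only [Function.mem_support, ne_eq, ite_eq_right_iff, not_forall] at ha hb
  exact he (ha.1.trans hb.1.symm)

lemma finsum_ind (e : ℕ → ℤ) (he : Function.Injective e) (n : ℤ) :
    (∑ᶠ i : ℕ, if e i = n then (1 : ZMod 2) else 0)
      = if n ∈ Set.range e then 1 else 0 := by
  by_cases h : n ∈ Set.range e
  · obtain ⟨i0, hi0⟩ := h
    rw [finsum_eq_single _ i0, if_pos hi0, if_pos ⟨i0, hi0⟩]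
    intro b hb
    simp only [ite_eq_right_iff]
    intro hbe
    exact absurd (he (hbe.trans hi0.symm)) hb
  · rw [finsum_eq_zero_of_forall_eq_zero, if_neg h]
    intro i
    simp only [ite_eq_right_iff]
    intro hie
    exact absurd ⟨i, hie⟩ h

lemma coeffs (r : YPartition) (m : ℤ) :
    ((∑ᶠ i : ℕ, ((T (2 * dseq r i - 1) : LaurentPolynomial (ZMod 2))
        - T (-2 * (i : ℤ) - 1)))).coeff (2 * m - 1)
      = (if m ∈ Set.range (dseq r) then (1 : ZMod 2) else 0) - (if m ≤ 0 then 1 else 0) := by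
  obtain ⟨N, hN⟩ := r.eventually_zero
  have hsupp : (Function.support fun i : ℕ =>
      ((T (2 * dseq r i - 1) : LaurentPolynomial (ZMod 2)) - T (-2 * (i : ℤ) - 1))).Finite := by
    apply Set.Finite.subset (Set.finite_Iio N)
    intro i hi
    simp only [Function.mem_support] at hi
    by_contra hc
    simp only [Set.mem_Iio, not_lt] at hc
    apply hi
    have hd : dseq r i = -(i : ℤ) := by unfold dseq; rw [hN i hc]; simp
    rw [hd]
    ring_nf
  have hmap : ((∑ᶠ i : ℕ, ((T (2 * dseq r i - 1) : LaurentPolynomial (ZMod 2))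
        - T (-2 * (i : ℤ) - 1)))).coeff (2 * m - 1)
      = ∑ᶠ i : ℕ, (((T (2 * dseq r i - 1) : LaurentPolynomial (ZMod 2))
        - T (-2 * (i : ℤ) - 1))).coeff (2 * m - 1) :=
    ((Finsupp.applyAddHom (2 * m - 1) : (ℤ →₀ ZMod 2) →+ ZMod 2).comp
      (AddMonoidAlgebra.coeffAddEquiv (R := ZMod 2) (M := ℤ)).toAddMonoidHom).map_finsum hsupp
  rw [hmap]
  have he1 : Function.Injective (fun i : ℕ => 2 * dseq r i - 1) := by
    intro a b hab
    simp only at hab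
    exact (dseq_strictAnti r).injective (by omega)
  have he2 : Function.Injective (fun i : ℕ => -2 * (i : ℤ) - 1) := by
    intro a b hab
    simp only at hab
    omega
  have hterm : ∀ i : ℕ,
      ((T (2 * dseq r i - 1) - T (-2 * (i : ℤ) - 1) : LaurentPolynomial (ZMod 2))).coeff (2 * m - 1)
        = (if (fun i : ℕ => 2 * dseq r i - 1) i = 2 * m - 1 then (1 : ZMod 2) else 0)
          - (if (fun i : ℕ => -2 * (i : ℤ) - 1) i = 2 * m - 1 then 1 else 0) := by
    intro i
    rw [AddMonoidAlgebra.coeff_sub, Finsupp.sub_apply]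
    simp only [T_apply]
  rw [finsum_congr hterm,
    finsum_sub_distrib (ind_support_finite _ he1 _) (ind_support_finite _ he2 _),
    finsum_ind _ he1 _, finsum_ind _ he2 _]
  congr 1
  · have : (2 * m - 1 ∈ Set.range fun i : ℕ => 2 * dseq r i - 1) ↔ m ∈ Set.range (dseq r) := by
      constructor
      · rintro ⟨i, hi⟩
        exact ⟨i, by simp only at hi; omega⟩
      · rintro ⟨i, hi⟩
        exact ⟨i, by simp only; omega⟩
    rw [if_congr this rfl rfl]
  · have : (2 * m - 1 ∈ Set.range fun i : ℕ => -2 * (i : ℤ) - 1) ↔ m ≤ 0 := by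
      constructor
      · rintro ⟨i, hi⟩
        simp only at hi
        omega
      · intro hm
        exact ⟨(-m).toNat, by simp only; omega⟩
    rw [if_congr this rfl rfl]

/-- The map `λ ↦ (s - s⁻¹) · C_λ(s²)` into `(ℤ/2ℤ)[s, s⁻¹]` is injective on partitions. -/
theorem partition_injective_sub_mul_contentPoly_sq_mod_two (p q : YPartition)
    (h : ((T 1 - T (-1)) : LaurentPolynomial (ZMod 2)) * contentPoly (ZMod 2) p 2
        = ((T 1 - T (-1)) : LaurentPolynomial (ZMod 2)) * contentPoly (ZMod 2) q 2) :
    p = q := by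
  rw [key p, key q] at h
  have hrange : Set.range (dseq p) = Set.range (dseq q) := by
    ext m
    have hp := coeffs p m
    have hq := coeffs q m
    rw [h] at hp
    rw [hq] at hp
    have := sub_left_injective hp
    clear h hp hq
    by_cases h1 : m ∈ Set.range (dseq p) <;> by_cases h2 : m ∈ Set.range (dseq q) <;>
      simp_all
  have hd : dseq p = dseq q :=
    strictAnti_range_eq (dseq_strictAnti p) (dseq_strictAnti q) hrange
  have hparts : p.parts = q.parts := by
    funext i
    have := congrFun hd i
    unfold dseq at this
    omega
  obtain ⟨pp, pa, pe⟩ := p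
  obtain ⟨qp, qa, qe⟩ := q
  simp_all
end

section
/- Let λ and μ be partitions. If the equality (s - s^{-1})·( v^{-1}·C_λ(s²) - v·C_λ(s^{-2}) ) = (s - s^{-1})·( v^{-1}·C_μ(s²) - v·C_μ(s^{-2}) ) holds in the ring of Laurent polynomials in the two variables v and s with coefficients in ℤ/2ℤ, then λ = μ. -/
open LaurentPolynomial

/-- The ring of Laurent polynomials `(ℤ/2ℤ)[v^{±1}, s^{±1}]` in two variables over `ℤ/2ℤ`,
realised as Laurent polynomials in `v` over Laurent polynomials in `s`. -/
abbrev L2 : Type := LaurentPolynomial (LaurentPolynomial (ZMod 2))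

/-- The monomial `v^n` in `(ℤ/2ℤ)[v^{±1}, s^{±1}]`. -/
noncomputable def V (n : ℤ) : L2 := T n

/-- The monomial `s^n` in `(ℤ/2ℤ)[v^{±1}, s^{±1}]`. -/
noncomputable def S (n : ℤ) : L2 := C (T n)

/-- The content polynomial of the partition `p` evaluated at `s^k`:
`∑_{(i,j) ∈ p} s^{k (j - i)}`, as an element of `(ℤ/2ℤ)[v^{±1}, s^{±1}]`.
Taking `k = 2` gives `C_p(s²)` and `k = -2` gives `C_p(s⁻²)`. -/
noncomputable def contentPolyS (p : YPartition) (k : ℤ) : L2 :=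
  ∑ᶠ i : ℕ, ∑ j ∈ Finset.range (p.parts i), S (k * ((j : ℤ) - (i : ℤ)))

/-- The Laurent-polynomial part of the mod-2 Lu–Zhong meridian eigenvalue:
`(s - s⁻¹) · (v⁻¹ · C_λ(s²) - v · C_λ(s⁻²))` in `(ℤ/2ℤ)[v^{±1}, s^{±1}]`. -/
noncomputable def luZhongPolyPart (p : YPartition) : L2 :=
  (S 1 - S (-1)) * (V (-1) * contentPolyS p 2 - V 1 * contentPolyS p (-2))

namespace YPAux

/-- Coefficient extraction for Laurent polynomials, as an additive hom. -/
noncomputable def coeffAt (R : Type*) [Semiring R] (k : ℤ) : LaurentPolynomial R →+ R :=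
  (Finsupp.applyAddHom k).comp (AddMonoidAlgebra.coeffAddEquiv (R := R) (M := ℤ)).toAddMonoidHom

lemma coeffAt_C_mul_T {R : Type*} [Semiring R] (k n : ℤ) (r : R) :
    coeffAt R k (C r * T n) = if n = k then r else 0 := by
  rw [← single_eq_C_mul_T]; exact Finsupp.single_apply

lemma coeffAt_T {R : Type*} [Semiring R] (k n : ℤ) :
    coeffAt R k (T n : LaurentPolynomial R) = if n = k then 1 else 0 := by
  rw [show (T n : LaurentPolynomial R) = C 1 * T n by rw [map_one, one_mul]]
  exact coeffAt_C_mul_T k n 1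

/-- A bound beyond which all parts vanish. -/
noncomputable def bd (p : YPartition) : ℕ := Classical.choose p.eventually_zero

lemma bd_spec (p : YPartition) {n : ℕ} (h : bd p ≤ n) : p.parts n = 0 :=
  Classical.choose_spec p.eventually_zero n h

lemma lt_bd_of_pos (p : YPartition) {n : ℕ} (h : 0 < p.parts n) : n < bd p := by
  by_contra hn
  rw [bd_spec p (le_of_not_gt hn)] at h
  exact Nat.lt_irrefl 0 h

lemma exA (p : YPartition) (c : ℕ) : ∃ i, ¬ (c + i < p.parts i) :=
  ⟨bd p, by rw [bd_spec p le_rfl]; omega⟩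

/-- Number of cells of content `c ≥ 0`. -/
noncomputable def A (p : YPartition) (c : ℕ) : ℕ := Nat.find (exA p c)

lemma exB (p : YPartition) (d : ℕ) : ∃ k, ¬ (k < p.parts (k + d)) :=
  ⟨bd p, by rw [bd_spec p (by omega)]; omega⟩

/-- Number of cells of content `-d ≤ 0`. -/
noncomputable def B (p : YPartition) (d : ℕ) : ℕ := Nat.find (exB p d)

lemma A_iff (p : YPartition) (c i : ℕ) : i < A p c ↔ c + i < p.parts i := by
  constructor
  · intro hi
    by_contra hP
    have : A p c ≤ i := Nat.find_le hP
    omega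
  · intro hP
    by_contra hi
    have h1 : ¬ (c + A p c < p.parts (A p c)) := Nat.find_spec (exA p c)
    have h2 : A p c ≤ i := by omega
    have h3 : p.parts i ≤ p.parts (A p c) := p.antitone' h2
    omega

lemma B_iff (p : YPartition) (d k : ℕ) : k < B p d ↔ k < p.parts (k + d) := by
  constructor
  · intro hk
    by_contra hP
    have : B p d ≤ k := Nat.find_le hP
    omega
  · intro hP
    by_contra hk
    have h1 : ¬ (B p d < p.parts (B p d + d)) := Nat.find_spec (exB p d)
    have h2 : B p d ≤ k := by omega
    have h3 : p.parts (k + d) ≤ p.parts (B p d + d) := p.antitone' (by omega)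
    omega

lemma A_le_bd (p : YPartition) (c : ℕ) : A p c ≤ bd p :=
  Nat.find_le (by rw [bd_spec p le_rfl]; omega)

lemma B_le_bd (p : YPartition) (d : ℕ) : B p d ≤ bd p :=
  Nat.find_le (by rw [bd_spec p (by omega)]; omega)

lemma A_succ_le (p : YPartition) (c : ℕ) : A p (c + 1) ≤ A p c := by
  by_contra h
  have h1 : A p c < A p (c + 1) := by omega
  have := (A_iff p (c + 1) (A p c)).1 h1
  have := (A_iff p c (A p c)).2 (by omega)
  omega

lemma A_le_succ (p : YPartition) (c : ℕ) : A p c ≤ A p (c + 1) + 1 := by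
  by_contra h
  have h1 : A p (c + 1) + 1 < A p c := by omega
  have h2 := (A_iff p c (A p (c + 1) + 1)).1 h1
  have h3 : p.parts (A p (c + 1) + 1) ≤ p.parts (A p (c + 1)) := p.antitone' (by omega)
  have := (A_iff p (c + 1) (A p (c + 1))).2 (by omega)
  omega

lemma B_succ_le (p : YPartition) (d : ℕ) : B p (d + 1) ≤ B p d := by
  by_contra h
  have h1 : B p d < B p (d + 1) := by omega
  have h2 := (B_iff p (d + 1) (B p d)).1 h1
  have h3 : p.parts (B p d + (d + 1)) ≤ p.parts (B p d + d) := p.antitone' (by omega)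
  have := (B_iff p d (B p d)).2 (by omega)
  omega

lemma B_le_succ (p : YPartition) (d : ℕ) : B p d ≤ B p (d + 1) + 1 := by
  by_contra h
  have h1 : B p (d + 1) + 1 < B p d := by omega
  have h2 := (B_iff p d (B p (d + 1) + 1)).1 h1
  have h3 : p.parts (B p (d + 1) + 1 + d) = p.parts (B p (d + 1) + (d + 1)) := by
    congr 1; omega
  have := (B_iff p (d + 1) (B p (d + 1))).2 (by omega)
  omega

lemma A_eventually_zero (p : YPartition) {c : ℕ} (h : p.parts 0 ≤ c) : A p c = 0 := by
  by_contra hA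
  have := (A_iff p c 0).1 (by omega)
  have : p.parts 0 ≤ p.parts 0 := le_rfl
  have h0 : p.parts 0 ≥ p.parts 0 := le_rfl
  omega

lemma B_eventually_zero (p : YPartition) {d : ℕ} (h : bd p ≤ d) : B p d = 0 := by
  by_contra hB
  have := (B_iff p d 0).1 (by omega)
  rw [bd_spec p (by omega)] at this
  omega

/-- Two eventually-zero step sequences with unit steps and equal parities are equal. -/
lemma parity_eq {f g : ℕ → ℕ}
    (hf1 : ∀ n, f (n + 1) ≤ f n) (hf2 : ∀ n, f n ≤ f (n + 1) + 1)
    (hg1 : ∀ n, g (n + 1) ≤ g n) (hg2 : ∀ n, g n ≤ g (n + 1) + 1)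
    {N : ℕ} (hfN : ∀ n, N ≤ n → f n = 0) (hgN : ∀ n, N ≤ n → g n = 0)
    (hpar : ∀ n, (f n : ZMod 2) = (g n : ZMod 2)) : ∀ n, f n = g n := by
  have key : ∀ k n, n + k = N → f n = g n := by
    intro k
    induction k with
    | zero => intro n hn; rw [hfN n (by omega), hgN n (by omega)]
    | succ k ih =>
      intro n hn
      have h1 : f (n + 1) = g (n + 1) := ih (n + 1) (by omega)
      have h2 := hf1 n; have h3 := hf2 n; have h4 := hg1 n; have h5 := hg2 n
      have h6 := hpar n
      rcases Nat.lt_or_ge (f n) (g n) with hlt | hge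
      · -- f n = g(n+1) = f(n+1), g n = g(n+1)+1
        have hf : f n = f (n + 1) := by omega
        have hg : g n = g (n + 1) + 1 := by omega
        rw [hf, hg, h1, Nat.cast_add, Nat.cast_one] at h6
        have : (1 : ZMod 2) = 0 := by
          have := add_left_cancel (a := ((g (n+1) : ZMod 2))) (b := 1) (c := 0)
          apply this
          rw [add_zero]
          exact h6.symm
        exact absurd this (by decide)
      · rcases Nat.lt_or_ge (g n) (f n) with hlt' | hge'
        · have hf : f n = f (n + 1) + 1 := by omega
          have hg : g n = g (n + 1) := by omega
          rw [hf, hg, h1, Nat.cast_add, Nat.cast_one] at h6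
          have : (1 : ZMod 2) = 0 := by
            have := add_left_cancel (a := ((g (n+1) : ZMod 2))) (b := 1) (c := 0)
            apply this
            rw [add_zero]
            exact h6
          exact absurd this (by decide)
        · omega
  intro n
  rcases Nat.lt_or_ge n N with h | h
  · exact key (N - n) n (by omega)
  · rw [hfN n h, hgN n h]

/-- The `s`-Laurent polynomial `∑_{(i,j) ∈ p} s^{k(j-i)}`. -/
noncomputable def cps (p : YPartition) (k : ℤ) : LaurentPolynomial (ZMod 2) :=
  ∑ i ∈ Finset.range (bd p), ∑ j ∈ Finset.range (p.parts i), T (k * ((j : ℤ) - (i : ℤ)))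

lemma contentPolyS_eq (p : YPartition) (k : ℤ) :
    contentPolyS p k = C (cps p k) := by
  rw [contentPolyS, cps, map_sum]
  have : ∀ i, C (∑ j ∈ Finset.range (p.parts i), (T (k * ((j : ℤ) - (i : ℤ))) :
      LaurentPolynomial (ZMod 2))) =
      ∑ j ∈ Finset.range (p.parts i), S (k * ((j : ℤ) - (i : ℤ))) := by
    intro i; rw [map_sum]; rfl
  simp_rw [this]
  apply finsum_eq_sum_of_support_subset
  intro i hi
  simp only [Function.mem_support, ne_eq] at hi
  simp only [Finset.coe_range, Set.mem_Iio]
  by_contra hib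
  apply hi
  rw [bd_spec p (le_of_not_gt hib)]
  simp

lemma coeffAt_cps (p : YPartition) (k t : ℤ) :
    coeffAt (ZMod 2) t (cps p k) =
      (((Finset.range (bd p)).sigma fun i => Finset.range (p.parts i)).filter
        (fun x => k * ((x.2 : ℤ) - (x.1 : ℤ)) = t)).card := by
  rw [cps, map_sum]
  simp_rw [map_sum, coeffAt_T]
  rw [Finset.sum_sigma']
  rw [Finset.sum_boole]

lemma coeffAt_cps_A (p : YPartition) (c : ℕ) :
    coeffAt (ZMod 2) (2 * (c : ℤ)) (cps p 2) = (A p c : ZMod 2) := by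
  rw [coeffAt_cps]
  congr 1
  rw [show A p c = (Finset.range (A p c)).card from (Finset.card_range _).symm]
  refine Finset.card_bij' (fun x _ => x.1) (fun i _ => ⟨i, c + i⟩) ?_ ?_ ?_ ?_
  · rintro ⟨i, j⟩ hx
    simp only [Finset.mem_filter, Finset.mem_sigma, Finset.mem_range] at hx
    obtain ⟨⟨hi, hj⟩, hc⟩ := hx
    simp only [Finset.mem_range]
    rw [A_iff]
    omega
  · intro i hi
    simp only [Finset.mem_range] at hi
    rw [A_iff] at hi
    simp only [Finset.mem_filter, Finset.mem_sigma, Finset.mem_range]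
    refine ⟨⟨?_, by omega⟩, by push_cast; ring⟩
    have : 0 < p.parts i := by omega
    exact lt_bd_of_pos p this
  · rintro ⟨i, j⟩ hx
    simp only [Finset.mem_filter, Finset.mem_sigma, Finset.mem_range] at hx
    obtain ⟨⟨hi, hj⟩, hc⟩ := hx
    have : j = c + i := by omega
    simp [this]
  · intro i hi; rfl

lemma coeffAt_cps_B (p : YPartition) (d : ℕ) :
    coeffAt (ZMod 2) (2 * (d : ℤ)) (cps p (-2)) = (B p d : ZMod 2) := by
  rw [coeffAt_cps]
  congr 1
  rw [show B p d = (Finset.range (B p d)).card from (Finset.card_range _).symm]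
  refine Finset.card_bij' (fun x _ => x.2) (fun k _ => ⟨k + d, k⟩) ?_ ?_ ?_ ?_
  · rintro ⟨i, j⟩ hx
    simp only [Finset.mem_filter, Finset.mem_sigma, Finset.mem_range] at hx
    obtain ⟨⟨hi, hj⟩, hc⟩ := hx
    have hij : i = j + d := by omega
    simp only [Finset.mem_range]
    rw [B_iff, ← hij]
    omega
  · intro k hk
    simp only [Finset.mem_range] at hk
    rw [B_iff] at hk
    simp only [Finset.mem_filter, Finset.mem_sigma, Finset.mem_range]
    refine ⟨⟨?_, by omega⟩, by push_cast; ring⟩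
    have : 0 < p.parts (k + d) := by omega
    exact lt_bd_of_pos p this
  · rintro ⟨i, j⟩ hx
    simp only [Finset.mem_filter, Finset.mem_sigma, Finset.mem_range] at hx
    obtain ⟨⟨hi, hj⟩, hc⟩ := hx
    have : i = j + d := by omega
    simp [this]
  · intro k hk; rfl

lemma aT_ne_zero : (T 1 - T (-1) : LaurentPolynomial (ZMod 2)) ≠ 0 := by
  intro h
  have : coeffAt (ZMod 2) 1 (T 1 - T (-1) : LaurentPolynomial (ZMod 2)) = 0 := by
    rw [h]; exact map_zero _
  rw [map_sub, coeffAt_T, coeffAt_T] at this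
  norm_num at this

lemma cps_eq_of_eq {p q : YPartition} (h : luZhongPolyPart p = luZhongPolyPart q) :
    cps p 2 = cps q 2 := by
  have key : ∀ r : YPartition, luZhongPolyPart r =
      C ((T 1 - T (-1)) * cps r 2) * T (-1) - C ((T 1 - T (-1)) * cps r (-2)) * T 1 := by
    intro r
    rw [luZhongPolyPart, contentPolyS_eq, contentPolyS_eq, S, S, V, V, ← map_sub, map_mul,
      map_mul]
    ring
  rw [key p, key q] at h
  have h2 := congrArg (coeffAt (LaurentPolynomial (ZMod 2)) (-1)) h
  rw [map_sub, map_sub, coeffAt_C_mul_T, coeffAt_C_mul_T, coeffAt_C_mul_T, coeffAt_C_mul_T]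
    at h2
  norm_num at h2
  exact h2.resolve_right aT_ne_zero

lemma cps_eq_of_eq' {p q : YPartition} (h : luZhongPolyPart p = luZhongPolyPart q) :
    cps p (-2) = cps q (-2) := by
  have key : ∀ r : YPartition, luZhongPolyPart r =
      C ((T 1 - T (-1)) * cps r 2) * T (-1) - C ((T 1 - T (-1)) * cps r (-2)) * T 1 := by
    intro r
    rw [luZhongPolyPart, contentPolyS_eq, contentPolyS_eq, S, S, V, V, ← map_sub, map_mul,
      map_mul]
    ring
  rw [key p, key q] at h
  have h2 := congrArg (coeffAt (LaurentPolynomial (ZMod 2)) 1) h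
  rw [map_sub, map_sub, coeffAt_C_mul_T, coeffAt_C_mul_T, coeffAt_C_mul_T, coeffAt_C_mul_T]
    at h2
  norm_num at h2
  exact h2.resolve_right aT_ne_zero

end YPAux

open YPAux in
/-- If `(s - s⁻¹)(v⁻¹ C_λ(s²) - v C_λ(s⁻²)) = (s - s⁻¹)(v⁻¹ C_μ(s²) - v C_μ(s⁻²))`
in `(ℤ/2ℤ)[v^{±1}, s^{±1}]`, then `λ = μ`. -/
theorem partition_injective_luZhongPolyPart (p q : YPartition)
    (h : luZhongPolyPart p = luZhongPolyPart q) : p = q := by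
  have hcps : cps p 2 = cps q 2 := cps_eq_of_eq h
  -- parities of A and B agree
  have hApar : ∀ c : ℕ, ((A p c : ZMod 2)) = (A q c : ZMod 2) := by
    intro c
    rw [← coeffAt_cps_A p c, ← coeffAt_cps_A q c, hcps]
  have hBpar : ∀ d : ℕ, ((B p d : ZMod 2)) = (B q d : ZMod 2) := by
    intro d
    rw [← coeffAt_cps_B p d, ← coeffAt_cps_B q d, cps_eq_of_eq' h]
  have hA : ∀ c, A p c = A q c := by
    apply parity_eq (A_succ_le p) (A_le_succ p) (A_succ_le q) (A_le_succ q)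
      (N := max (p.parts 0) (q.parts 0))
    · intro n hn; exact A_eventually_zero p (by omega)
    · intro n hn; exact A_eventually_zero q (by omega)
    · exact hApar
  have hB : ∀ d, B p d = B q d := by
    apply parity_eq (B_succ_le p) (B_le_succ p) (B_succ_le q) (B_le_succ q)
      (N := max (bd p) (bd q))
    · intro n hn; exact B_eventually_zero p (by omega)
    · intro n hn; exact B_eventually_zero q (by omega)
    · exact hBpar
  -- recover the parts
  have hcell : ∀ i j : ℕ, j < p.parts i ↔ j < q.parts i := by
    intro i j
    rcases le_or_gt i j with hij | hij
    · have hp := A_iff p (j - i) i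
      have hq := A_iff q (j - i) i
      rw [hA] at hp
      omega
    · have hp := B_iff p (i - j) j
      have hq := B_iff q (i - j) j
      rw [hB] at hp
      rw [show j + (i - j) = i by omega] at hp hq
      omega
  have hparts : p.parts = q.parts := by
    funext i
    have h1 := hcell i (p.parts i)
    have h2 := hcell i (q.parts i)
    omega
  cases p; cases q
  simpa using hparts
end

section
/- Let F be the field of fractions of the (integral domain of) Laurent polynomials (ℤ/2ℤ)[v^{±1}, s^{±1}] in two variables over ℤ/2ℤ. For a partition λ define, as an element of F, c_λ = (s - s^{-1})·( v^{-1}·C_λ(s²) - v·C_λ(s^{-2}) ) + (v^{-1} - v)/(s - s^{-1}) + 1. Then the assignment λ ↦ c_λ is injective: if c_λ = c_μ in F then λ = μ. -/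
open LaurentPolynomial

instance : IsDomain L2 := NoZeroDivisors.to_isDomain _

set_option synthInstance.maxHeartbeats 1000000 in
/-- The mod-2 Lu–Zhong meridian eigenvalue
`c_λ = (s - s⁻¹)(v⁻¹ C_λ(s²) - v C_λ(s⁻²)) + (v⁻¹ - v)/(s - s⁻¹) + 1`,
as an element of the field of fractions `F` of `(ℤ/2ℤ)[v^{±1}, s^{±1}]`. -/
noncomputable def luZhongEigenvalue (p : YPartition) : FractionRing L2 :=
  algebraMap L2 (FractionRing L2)
      ((S 1 - S (-1)) * (V (-1) * contentPolyS p 2 - V 1 * contentPolyS p (-2)))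
    + algebraMap L2 (FractionRing L2) (V (-1) - V 1)
        / algebraMap L2 (FractionRing L2) (S 1 - S (-1))
    + 1

/- ### Auxiliary material -/

namespace LuZhongAux

open Finset

/-- The coefficient ring `(ℤ/2ℤ)[s^{±1}]`. -/
noncomputable abbrev R1 : Type := LaurentPolynomial (ZMod 2)

lemma C_inj' {R : Type*} [Semiring R] {a b : R} (h : (C a : R[T;T⁻¹]) = C b) : a = b :=
  by simpa using congrArg (fun f : R[T;T⁻¹] => f.coeff 0) h

lemma S_sub_ne : S 1 - S (-1) ≠ 0 := by
  intro h
  have h2 : (C (T 1 - T (-1)) : L2) = C 0 := by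
    rw [map_sub, map_zero]; exact h
  have h3 := sub_eq_zero.mp (C_inj' h2)
  have h4 := AddMonoidAlgebra.single_inj.mp
    (h3 : (AddMonoidAlgebra.single (1:ℤ) (1:ZMod 2) : R1) = AddMonoidAlgebra.single (-1) 1)
  rcases h4 with ⟨h5,_⟩|⟨h5,_⟩
  · omega
  · exact one_ne_zero h5

lemma contentPolyS_eq (p : YPartition) (k : ℤ) (N : ℕ) (hN : ∀ n, N ≤ n → p.parts n = 0) :
    contentPolyS p k
      = ∑ i ∈ range N, ∑ j ∈ range (p.parts i), S (k * ((j : ℤ) - (i : ℤ))) := by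
  apply finsum_eq_sum_of_support_subset
  intro i hi
  by_contra hc
  simp only [mem_coe, mem_range, not_lt] at hc
  rw [Function.mem_support, hN i hc] at hi
  simp at hi

lemma contentPolyS_eq_C (p : YPartition) (k : ℤ) (N : ℕ) (hN : ∀ n, N ≤ n → p.parts n = 0) :
    contentPolyS p k
      = C (∑ i ∈ range N, ∑ j ∈ range (p.parts i), (T (k * ((j : ℤ) - (i : ℤ))) : R1)) := by
  rw [contentPolyS_eq p k N hN, map_sum]
  exact sum_congr rfl fun i _ => by rw [map_sum]; rfl

lemma telescope (i m : ℕ) :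
    (T 2 - 1) * ∑ j ∈ range m, (T (2 * ((j : ℤ) - (i : ℤ))) : R1)
      = T (2 * ((m : ℤ) - (i : ℤ))) - T (2 * ((0 : ℤ) - (i : ℤ))) := by
  rw [mul_sum]
  have h1 : ∀ j ∈ range m,
      (T 2 - 1) * (T (2 * ((j : ℤ) - (i : ℤ))) : R1)
        = T (2 * (((j + 1 : ℕ) : ℤ) - (i : ℤ))) - T (2 * ((j : ℤ) - (i : ℤ))) := by
    intro j _
    rw [sub_mul, one_mul, ← T_add]
    congr 2
    push_cast
    ring
  rw [sum_congr rfl h1,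
    Finset.sum_range_sub (fun j : ℕ => (T (2 * ((j : ℤ) - (i : ℤ))) : R1))]
  norm_num

/-- Two strictly decreasing sequences on `range N` with the same image agree on `range N`. -/
lemma strictAnti_eq {N : ℕ} {e e' : ℕ → ℤ}
    (he : ∀ ⦃i j⦄, i < j → e j < e i) (he' : ∀ ⦃i j⦄, i < j → e' j < e' i)
    (him : ∀ i, i < N → ∃ i', i' < N ∧ e' i' = e i)
    (him' : ∀ i, i < N → ∃ i', i' < N ∧ e i' = e' i) :
    ∀ i, i < N → e i = e' i := by
  intro i
  induction i using Nat.strong_induction_on with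
  | _ i IH =>
    intro hiN
    obtain ⟨k, hk, hke⟩ := him i hiN
    obtain ⟨m, hm, hme⟩ := him' i hiN
    have h1 : e i ≤ e' i := by
      rcases lt_trichotomy k i with hki | rfl | hik
      · exfalso
        have h2 := IH k hki (lt_trans hki hiN)
        have h3 := he hki
        omega
      · omega
      · have := he' hik
        omega
    have h2 : e' i ≤ e i := by
      rcases lt_trichotomy m i with hmi | rfl | him2
      · exfalso
        have h2 := IH m hmi (lt_trans hmi hiN)
        have h3 := he' hmi
        omega
      · omega
      · have := he him2
        omega
    omega

lemma parts_strictAnti (p : YPartition) :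
    ∀ ⦃i j : ℕ⦄, i < j → 2 * (((p.parts j : ℤ)) - (j : ℤ)) < 2 * ((p.parts i : ℤ) - (i : ℤ)) := by
  intro i j hij
  have := p.antitone' (le_of_lt hij)
  omega

lemma sum_T_apply_self {N : ℕ} {e : ℕ → ℤ} (he : ∀ ⦃i j⦄, i < j → e j < e i)
    {i0 : ℕ} (hi0 : i0 < N) :
    (∑ i ∈ range N, (T (e i) : R1)).coeff (e i0) = 1 := by
  rw [AddMonoidAlgebra.coeff_sum, Finsupp.finset_sum_apply]
  have h1 : ∀ i ∈ range N, ((T (e i) : R1)).coeff (e i0) = if i = i0 then 1 else 0 := by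
    intro i _
    rw [T_apply]
    congr 1
    · rw [eq_iff_iff]
      constructor
      · intro h
        by_contra hne
        rcases lt_or_gt_of_ne hne with h2 | h2
        · exact absurd h (ne_of_gt (he h2))
        · exact absurd h (ne_of_lt (he h2))
      · rintro rfl; rfl
  rw [sum_congr rfl h1, Finset.sum_ite_eq' (range N) i0 (fun _ => (1 : ZMod 2))]
  simp [mem_range.mpr hi0]

/-- The key combinatorial step: the mod-2 content polynomial determines the partition. -/
lemma key (p q : YPartition) (N : ℕ)
    (hp : ∀ n, N ≤ n → p.parts n = 0) (hq : ∀ n, N ≤ n → q.parts n = 0)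
    (h : (∑ i ∈ range N, ∑ j ∈ range (p.parts i), (T (2 * ((j : ℤ) - (i : ℤ))) : R1))
        = ∑ i ∈ range N, ∑ j ∈ range (q.parts i), (T (2 * ((j : ℤ) - (i : ℤ))) : R1)) :
    p = q := by
  set ep : ℕ → ℤ := fun i => 2 * ((p.parts i : ℤ) - (i : ℤ)) with hep
  set eq' : ℕ → ℤ := fun i => 2 * ((q.parts i : ℤ) - (i : ℤ)) with heq
  have hmul := congrArg (fun x : R1 => (T 2 - 1) * x) h
  rw [mul_sum, mul_sum] at hmul
  rw [sum_congr rfl (fun i _ => telescope i (p.parts i)),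
    sum_congr rfl (fun i _ => telescope i (q.parts i)),
    Finset.sum_sub_distrib, Finset.sum_sub_distrib] at hmul
  have hE : (∑ i ∈ range N, (T (ep i) : R1)) = ∑ i ∈ range N, (T (eq' i) : R1) :=
    sub_left_inj.mp hmul
  have hpa := parts_strictAnti p
  have hqa := parts_strictAnti q
  have himg : ∀ i, i < N → ∃ i', i' < N ∧ eq' i' = ep i := by
    intro i0 hi0
    by_contra hc
    push_neg at hc
    have h1 := sum_T_apply_self hpa hi0
    rw [hE, AddMonoidAlgebra.coeff_sum, Finsupp.finset_sum_apply] at h1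
    have h2 : ∀ i ∈ range N, ((T (eq' i) : R1)).coeff (ep i0) = 0 := by
      intro i hi
      rw [T_apply, if_neg (hc i (mem_range.mp hi))]
    rw [sum_congr rfl h2, Finset.sum_const_zero] at h1
    exact absurd h1 (by decide)
  have himg' : ∀ i, i < N → ∃ i', i' < N ∧ ep i' = eq' i := by
    intro i0 hi0
    by_contra hc
    push_neg at hc
    have h1 := sum_T_apply_self hqa hi0
    rw [← hE, AddMonoidAlgebra.coeff_sum, Finsupp.finset_sum_apply] at h1
    have h2 : ∀ i ∈ range N, ((T (ep i) : R1)).coeff (eq' i0) = 0 := by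
      intro i hi
      rw [T_apply, if_neg (hc i (mem_range.mp hi))]
    rw [sum_congr rfl h2, Finset.sum_const_zero] at h1
    exact absurd h1 (by decide)
  have hagree := strictAnti_eq hpa hqa himg himg'
  have hparts : p.parts = q.parts := by
    funext n
    rcases lt_or_ge n N with hn | hn
    · have := hagree n hn
      have : 2 * ((p.parts n : ℤ) - (n : ℤ)) = 2 * ((q.parts n : ℤ) - (n : ℤ)) := this
      omega
    · rw [hp n hn, hq n hn]
  cases p; cases q
  simpa using hparts

end LuZhongAux

set_option synthInstance.maxHeartbeats 1000000 in
set_option maxHeartbeats 1000000 in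
open LuZhongAux Finset in
/-- The assignment `λ ↦ c_λ` of the mod-2 Lu–Zhong eigenvalue is injective:
if `c_λ = c_μ` in the fraction field `F` of `(ℤ/2ℤ)[v^{±1}, s^{±1}]`, then `λ = μ`. -/
theorem partition_injective_luZhongEigenvalue (p q : YPartition)
    (h : luZhongEigenvalue p = luZhongEigenvalue q) : p = q := by
  obtain ⟨Np, hNp⟩ := p.eventually_zero
  obtain ⟨Nq, hNq⟩ := q.eventually_zero
  set N := max Np Nq with hN
  have hp : ∀ n, N ≤ n → p.parts n = 0 := fun n hn => hNp n (le_trans (le_max_left _ _) hn)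
  have hq : ∀ n, N ≤ n → q.parts n = 0 := fun n hn => hNq n (le_trans (le_max_right _ _) hn)
  unfold luZhongEigenvalue at h
  have h1 := add_right_cancel (add_right_cancel h)
  have h2 := IsFractionRing.injective L2 (FractionRing L2) h1
  have h3 := mul_left_cancel₀ S_sub_ne h2
  rw [contentPolyS_eq_C p 2 N hp, contentPolyS_eq_C p (-2) N hp,
    contentPolyS_eq_C q 2 N hq, contentPolyS_eq_C q (-2) N hq] at h3
  set A := ∑ i ∈ range N, ∑ j ∈ range (p.parts i), (T (2 * ((j : ℤ) - (i : ℤ))) : R1) with hA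
  set B := ∑ i ∈ range N, ∑ j ∈ range (p.parts i), (T ((-2) * ((j : ℤ) - (i : ℤ))) : R1) with hB
  set A' := ∑ i ∈ range N, ∑ j ∈ range (q.parts i), (T (2 * ((j : ℤ) - (i : ℤ))) : R1) with hA'
  set B' := ∑ i ∈ range N, ∑ j ∈ range (q.parts i), (T ((-2) * ((j : ℤ) - (i : ℤ))) : R1) with hB'
  have hsingle : ∀ a b : R1,
      V (-1) * C a - V 1 * C b
        = (AddMonoidAlgebra.single (-1 : ℤ) a - AddMonoidAlgebra.single 1 b : L2) := by
    intro a b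
    rw [single_eq_C_mul_T, single_eq_C_mul_T]
    show T (-1) * C a - T 1 * C b = _
    ring
  rw [hsingle A B, hsingle A' B'] at h3
  have hAA : A = A' := by
    have h4 : (AddMonoidAlgebra.single (-1 : ℤ) (A - A') : L2) = AddMonoidAlgebra.single 1 (B - B') := by
      rw [AddMonoidAlgebra.single_sub, AddMonoidAlgebra.single_sub]
      exact sub_eq_sub_iff_sub_eq_sub.mp h3
    rcases AddMonoidAlgebra.single_inj.mp h4 with ⟨h5, _⟩ | ⟨h5, _⟩
    · omega
    · exact sub_eq_zero.mp h5
  exact key p q N hp hq hAA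
end

section
/- Let F be the field of fractions of (ℤ/2ℤ)[v^{±1}, s^{±1}], and for each partition μ let c_μ ∈ F denote the mod-2 Lu–Zhong eigenvalue c_μ = (s - s^{-1})·( v^{-1}·C_μ(s²) - v·C_μ(s^{-2}) ) + (v^{-1} - v)/(s - s^{-1}) + 1. Let ρ be a partition and let ρ⁺ (respectively ρ⁻) be the set of partitions obtained from ρ by adding (respectively deleting) exactly one cell of its Young diagram. Then for any fixed λ ∈ ρ⁺ ∪ ρ⁻, the product Π_{μ ∈ (ρ⁺ ∪ ρ⁻) \ {λ}} (c_λ - c_μ) is nonzero in F; equivalently, the polynomial X(t) = Π_{μ ∈ (ρ⁺ ∪ ρ⁻) \ {λ}} (t - c_μ) satisfies X(c_λ) ≠ 0. -/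
open LaurentPolynomial

/-- The number of cells `|p|` of the Young diagram of `p`, i.e. the sum of its parts. -/
noncomputable def YPartition.size (p : YPartition) : ℕ := ∑ᶠ i, p.parts i

/-- `ρ⁺`: the set of partitions obtained from `ρ` by adding exactly one cell,
i.e. those `ν` whose Young diagram contains that of `ρ` with `|ν| = |ρ| + 1`. -/
def addOneCell (ρ : YPartition) : Set YPartition :=
  {ν | (∀ i, ρ.parts i ≤ ν.parts i) ∧ ν.size = ρ.size + 1}

/-- `ρ⁻`: the set of partitions obtained from `ρ` by deleting exactly one cell,
i.e. those `ν` whose Young diagram is contained in that of `ρ` with `|ν| + 1 = |ρ|`. -/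
def removeOneCell (ρ : YPartition) : Set YPartition :=
  {ν | (∀ i, ν.parts i ≤ ρ.parts i) ∧ ν.size + 1 = ρ.size}

section AuxLemmas

lemma L2.neg_eq (z : L2) : -z = z := by
  have h2 : (2 : L2) = 0 := by
    rw [← map_ofNat (algebraMap (ZMod 2) L2) 2]
    rw [show ((OfNat.ofNat 2 : ZMod 2)) = 0 from rfl, map_zero]
  have : z + z = 0 := by rw [← two_mul, h2, zero_mul]
  exact neg_eq_of_add_eq_zero_left this

lemma L2.sub_eq_add (x y : L2) : x - y = x + y := by
  rw [sub_eq_add_neg, L2.neg_eq]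

lemma C_ne_zero' {X : LaurentPolynomial (ZMod 2)} (hX : X ≠ 0) : (C X : L2) ≠ 0 := by
  intro h
  have h2 : (Finsupp.single (0 : ℤ) X : ℤ →₀ LaurentPolynomial (ZMod 2)) = 0 := congrArg AddMonoidAlgebra.coeff h
  have h3 := congrArg (fun p : ℤ →₀ LaurentPolynomial (ZMod 2) => p 0) h2
  simp only [Finsupp.single_apply, Finsupp.coe_zero, Pi.zero_apply, if_true] at h3
  exact hX h3

lemma T_sub_T_ne_zero {a b : ℤ} (h : a ≠ b) :
    (T a - T b : LaurentPolynomial (ZMod 2)) ≠ 0 := by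
  intro hh
  have h2 : (Finsupp.single a 1 - Finsupp.single b 1 : ℤ →₀ ZMod 2) = 0 := congrArg AddMonoidAlgebra.coeff hh
  have h3 := congrArg (fun p : ℤ →₀ ZMod 2 => p a) h2
  simp only [Finsupp.sub_apply, Finsupp.single_apply, Finsupp.coe_zero, Pi.zero_apply,
    if_true, if_neg (Ne.symm h), sub_zero] at h3
  exact one_ne_zero h3

lemma vcomb_ne_zero {X Y : LaurentPolynomial (ZMod 2)} (hX : X ≠ 0) :
    (T (-1) * C X - T 1 * C Y : L2) ≠ 0 := by
  intro h
  rw [T_mul, T_mul, ← single_eq_C_mul_T, ← single_eq_C_mul_T] at h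
  have h2 : (Finsupp.single (-1 : ℤ) X - Finsupp.single (1 : ℤ) Y :
      ℤ →₀ LaurentPolynomial (ZMod 2)) = 0 := congrArg AddMonoidAlgebra.coeff h
  have h3 := congrArg (fun p : ℤ →₀ LaurentPolynomial (ZMod 2) => p (-1)) h2
  simp only [Finsupp.sub_apply, Finsupp.single_apply, Finsupp.coe_zero, Pi.zero_apply,
    if_true, if_neg (show (1:ℤ) ≠ -1 by norm_num), sub_zero] at h3
  exact hX h3

lemma YPartition.ext' {p q : YPartition} (h : ∀ i, p.parts i = q.parts i) : p = q := by
  cases p; cases q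
  simp only [YPartition.mk.injEq]
  exact funext h

lemma size_eq_sum (p : YPartition) {N : ℕ} (hN : ∀ n, N ≤ n → p.parts n = 0) :
    p.size = ∑ i ∈ Finset.range N, p.parts i := by
  apply finsum_eq_finset_sum_of_support_subset
  intro x hx
  simp only [Function.mem_support] at hx
  simp only [Finset.coe_range, Set.mem_Iio]
  by_contra hc
  exact hx (hN x (le_of_not_gt hc))

lemma contentPolyS_eq_sum (p : YPartition) (k : ℤ) {N : ℕ} (hN : ∀ n, N ≤ n → p.parts n = 0) :
    contentPolyS p k = ∑ i ∈ Finset.range N,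
      ∑ j ∈ Finset.range (p.parts i), S (k * ((j : ℤ) - (i : ℤ))) := by
  apply finsum_eq_finset_sum_of_support_subset
  intro x hx
  simp only [Function.mem_support] at hx
  simp only [Finset.coe_range, Set.mem_Iio]
  by_contra hc
  apply hx
  rw [hN x (le_of_not_gt hc)]
  simp

lemma sum_one_diff {N : ℕ} {f g : ℕ → ℕ} (hle : ∀ i, g i ≤ f i)
    (h : ∑ i ∈ Finset.range N, f i = ∑ i ∈ Finset.range N, g i + 1) :
    ∃ i ∈ Finset.range N, f i = g i + 1 ∧ ∀ j ∈ Finset.range N, j ≠ i → f j = g j := by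
  set d := fun i => f i - g i with hd
  have hfd : ∀ i, f i = g i + d i := fun i => by simp [hd, Nat.add_sub_cancel' (hle i)]
  have hsum : ∑ i ∈ Finset.range N, d i = 1 := by
    have h2 : ∑ i ∈ Finset.range N, (g i + d i) = ∑ i ∈ Finset.range N, g i + 1 := by
      rw [← Finset.sum_congr rfl (fun i _ => hfd i)]; exact h
    rw [Finset.sum_add_distrib] at h2
    omega
  obtain ⟨i, hi, hdi_ne⟩ := Finset.exists_ne_zero_of_sum_ne_zero (hsum ▸ one_ne_zero)
  have hdi_le : d i ≤ 1 := hsum ▸ Finset.single_le_sum (fun j _ => Nat.zero_le _) hi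
  have hdi : d i = 1 := le_antisymm hdi_le (Nat.one_le_iff_ne_zero.mpr hdi_ne)
  have herase := Finset.add_sum_erase (Finset.range N) d hi
  have hrest : ∑ j ∈ (Finset.range N).erase i, d j = 0 := by omega
  refine ⟨i, hi, by rw [hfd i, hdi], fun j hj hne => ?_⟩
  have hz : d j = 0 := (Finset.sum_eq_zero_iff).mp hrest j (Finset.mem_erase.mpr ⟨hne, hj⟩)
  rw [hfd j, hz, add_zero]

lemma addOneCell_struct {ρ ν : YPartition} (h : ν ∈ addOneCell ρ) :
    ∃ i, ν.parts i = ρ.parts i + 1 ∧ ∀ j, j ≠ i → ν.parts j = ρ.parts j := by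
  obtain ⟨hle, hsz⟩ := h
  obtain ⟨N1, h1⟩ := ν.eventually_zero
  obtain ⟨N2, h2⟩ := ρ.eventually_zero
  have hν : ∀ n, max N1 N2 ≤ n → ν.parts n = 0 := fun n hn => h1 n (le_trans (le_max_left _ _) hn)
  have hρ : ∀ n, max N1 N2 ≤ n → ρ.parts n = 0 := fun n hn => h2 n (le_trans (le_max_right _ _) hn)
  have hs : ∑ i ∈ Finset.range (max N1 N2), ν.parts i
      = ∑ i ∈ Finset.range (max N1 N2), ρ.parts i + 1 := by
    rw [← size_eq_sum ν hν, ← size_eq_sum ρ hρ]; exact hsz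
  obtain ⟨i, hi, heq, hrest⟩ := sum_one_diff hle hs
  refine ⟨i, heq, fun j hj => ?_⟩
  by_cases hjN : j < max N1 N2
  · exact hrest j (Finset.mem_range.mpr hjN) hj
  · rw [hν j (le_of_not_gt hjN), hρ j (le_of_not_gt hjN)]

lemma removeOneCell_struct {ρ ν : YPartition} (h : ν ∈ removeOneCell ρ) :
    ∃ i, ν.parts i + 1 = ρ.parts i ∧ ∀ j, j ≠ i → ν.parts j = ρ.parts j := by
  have h' : ρ ∈ addOneCell ν := ⟨h.1, h.2.symm⟩
  obtain ⟨i, heq, hrest⟩ := addOneCell_struct h'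
  exact ⟨i, heq.symm, fun j hj => (hrest j hj).symm⟩

lemma contentPolyS_add {ρ ν : YPartition} {i : ℕ}
    (heq : ν.parts i = ρ.parts i + 1) (hrest : ∀ j, j ≠ i → ν.parts j = ρ.parts j) (k : ℤ) :
    contentPolyS ν k = contentPolyS ρ k + S (k * ((ρ.parts i : ℤ) - (i : ℤ))) := by
  obtain ⟨N1, h1⟩ := ν.eventually_zero
  obtain ⟨N2, h2⟩ := ρ.eventually_zero
  set N := max (max N1 N2) (i + 1) with hN
  have hν : ∀ n, N ≤ n → ν.parts n = 0 := fun n hn =>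
    h1 n (le_trans (le_trans (le_max_left _ _) (le_max_left _ _)) hn)
  have hρ : ∀ n, N ≤ n → ρ.parts n = 0 := fun n hn =>
    h2 n (le_trans (le_trans (le_max_right _ _) (le_max_left _ _)) hn)
  have hiN : i ∈ Finset.range N := Finset.mem_range.mpr (lt_of_lt_of_le (Nat.lt_succ_self i)
    (le_max_right _ _))
  rw [contentPolyS_eq_sum ν k hν, contentPolyS_eq_sum ρ k hρ,
    ← Finset.add_sum_erase _ _ hiN, ← Finset.add_sum_erase _ _ hiN]
  have hsame : ∑ j ∈ (Finset.range N).erase i, ∑ l ∈ Finset.range (ν.parts j),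
        S (k * ((l : ℤ) - (j : ℤ)))
      = ∑ j ∈ (Finset.range N).erase i, ∑ l ∈ Finset.range (ρ.parts j),
        S (k * ((l : ℤ) - (j : ℤ))) :=
    Finset.sum_congr rfl (fun j hj => by rw [hrest j (Finset.mem_erase.mp hj).1])
  rw [hsame, heq, Finset.sum_range_succ]
  ring

lemma decomp_add {ρ ν : YPartition} (h : ν ∈ addOneCell ρ) :
    ∃ i, ν.parts i = ρ.parts i + 1 ∧ (∀ j, j ≠ i → ν.parts j = ρ.parts j) ∧
      ∀ k, contentPolyS ν k = contentPolyS ρ k + S (k * ((ρ.parts i : ℤ) - (i : ℤ))) := by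
  obtain ⟨i, heq, hrest⟩ := addOneCell_struct h
  exact ⟨i, heq, hrest, fun k => contentPolyS_add heq hrest k⟩

lemma decomp_rem {ρ ν : YPartition} (h : ν ∈ removeOneCell ρ) :
    ∃ i, ν.parts i + 1 = ρ.parts i ∧ (∀ j, j ≠ i → ν.parts j = ρ.parts j) ∧
      ∀ k, contentPolyS ν k = contentPolyS ρ k + S (k * ((ν.parts i : ℤ) - (i : ℤ))) := by
  obtain ⟨i, heq, hrest⟩ := removeOneCell_struct h
  refine ⟨i, heq, hrest, fun k => ?_⟩
  have hsym : ∀ j, j ≠ i → ρ.parts j = ν.parts j := fun j hj => (hrest j hj).symm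
  have hrρ := contentPolyS_add (ρ := ν) (ν := ρ) heq.symm hsym k
  have h2 : contentPolyS ν k = contentPolyS ρ k - S (k * ((ν.parts i : ℤ) - (i : ℤ))) := by
    rw [hrρ]; ring
  rw [h2, L2.sub_eq_add]

lemma exists_AB {ρ lam μ : YPartition}
    (hlam : lam ∈ addOneCell ρ ∪ removeOneCell ρ)
    (hμ : μ ∈ addOneCell ρ ∪ removeOneCell ρ) (hne : lam ≠ μ) :
    ∃ A B : ℤ, A ≠ B ∧
      (∀ k, contentPolyS lam k = contentPolyS ρ k + S (k * A)) ∧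
      (∀ k, contentPolyS μ k = contentPolyS ρ k + S (k * B)) := by
  rcases hlam with hlam | hlam <;> rcases hμ with hμ | hμ
  · -- add / add
    obtain ⟨i, hli, hlrest, hldec⟩ := decomp_add hlam
    obtain ⟨i', hmi, hmrest, hmdec⟩ := decomp_add hμ
    have hii : i ≠ i' := by
      rintro rfl
      apply hne
      apply YPartition.ext'
      intro j
      by_cases hj : j = i
      · subst hj; rw [hli, hmi]
      · rw [hlrest j hj, hmrest j hj]
    refine ⟨_, _, ?_, hldec, hmdec⟩
    rcases lt_or_gt_of_ne hii with h | h
    · have := ρ.antitone' (le_of_lt h); omega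
    · have := ρ.antitone' (le_of_lt h); omega
  · -- add / rem
    obtain ⟨i, hli, hlrest, hldec⟩ := decomp_add hlam
    obtain ⟨i', hmi, hmrest, hmdec⟩ := decomp_rem hμ
    refine ⟨_, _, ?_, hldec, hmdec⟩
    rcases le_or_gt i i' with h | h
    · have := ρ.antitone' h
      omega
    · have ha : μ.parts (i' + 1) ≤ μ.parts i' := μ.antitone' (Nat.le_succ i')
      have hb : μ.parts (i' + 1) = ρ.parts (i' + 1) := hmrest _ (by omega)
      have hc : ρ.parts i ≤ ρ.parts (i' + 1) := ρ.antitone' (by omega)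
      omega
  · -- rem / add
    obtain ⟨i, hli, hlrest, hldec⟩ := decomp_rem hlam
    obtain ⟨i', hmi, hmrest, hmdec⟩ := decomp_add hμ
    refine ⟨_, _, ?_, hldec, hmdec⟩
    rcases le_or_gt i' i with h | h
    · have := ρ.antitone' h
      omega
    · have ha : lam.parts (i + 1) ≤ lam.parts i := lam.antitone' (Nat.le_succ i)
      have hb : lam.parts (i + 1) = ρ.parts (i + 1) := hlrest _ (by omega)
      have hc : ρ.parts i' ≤ ρ.parts (i + 1) := ρ.antitone' (by omega)
      omega
  · -- rem / rem
    obtain ⟨i, hli, hlrest, hldec⟩ := decomp_rem hlam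
    obtain ⟨i', hmi, hmrest, hmdec⟩ := decomp_rem hμ
    have hii : i ≠ i' := by
      rintro rfl
      apply hne
      apply YPartition.ext'
      intro j
      by_cases hj : j = i
      · subst hj; omega
      · rw [hlrest j hj, hmrest j hj]
    refine ⟨_, _, ?_, hldec, hmdec⟩
    rcases lt_or_gt_of_ne hii with h | h
    · have := ρ.antitone' (le_of_lt h); omega
    · have := ρ.antitone' (le_of_lt h); omega

end AuxLemmas

set_option synthInstance.maxHeartbeats 1000000
set_option maxHeartbeats 1000000

lemma eigen_ne {ρ lam μ : YPartition}
    (hlam : lam ∈ addOneCell ρ ∪ removeOneCell ρ)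
    (hμ : μ ∈ addOneCell ρ ∪ removeOneCell ρ) (hne : lam ≠ μ) :
    luZhongEigenvalue lam ≠ luZhongEigenvalue μ := by
  obtain ⟨A, B, hAB, hA, hB⟩ := exists_AB hlam hμ hne
  intro h
  unfold luZhongEigenvalue at h
  have h1 := add_right_cancel (add_right_cancel h)
  have h2 := IsFractionRing.injective L2 (FractionRing L2) h1
  rw [hA 2, hA (-2), hB 2, hB (-2)] at h2
  have h3 : (S 1 - S (-1)) *
      (V (-1) * (S (2 * A) - S (2 * B)) - V 1 * (S ((-2) * A) - S ((-2) * B))) = 0 := by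
    linear_combination h2
  have f1 : (S 1 - S (-1) : L2) ≠ 0 := by
    have e0 : (S 1 - S (-1) : L2) = C (T 1 - T (-1)) := (map_sub C _ _).symm
    rw [e0]
    exact C_ne_zero' (T_sub_T_ne_zero (by norm_num))
  have hX : (T (2 * A) - T (2 * B) : LaurentPolynomial (ZMod 2)) ≠ 0 :=
    T_sub_T_ne_zero (by omega)
  have f2 : (V (-1) * (S (2 * A) - S (2 * B))
      - V 1 * (S ((-2) * A) - S ((-2) * B)) : L2) ≠ 0 := by
    have e1 : (S (2 * A) - S (2 * B) : L2) = C (T (2 * A) - T (2 * B)) := (map_sub C _ _).symm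
    have e2 : (S ((-2) * A) - S ((-2) * B) : L2)
        = C (T ((-2) * A) - T ((-2) * B)) := (map_sub C _ _).symm
    rw [e1, e2]
    exact vcomb_ne_zero hX
  exact mul_ne_zero f1 f2 h3



/-- For a partition `ρ` and any `λ ∈ ρ⁺ ∪ ρ⁻`, the product
`∏_{μ ∈ (ρ⁺ ∪ ρ⁻) \ {λ}} (c_λ - c_μ)` of differences of mod-2 Lu–Zhong eigenvalues
is nonzero in the fraction field `F` of `(ℤ/2ℤ)[v^{±1}, s^{±1}]`; equivalently,
`X(t) = ∏_{μ ∈ (ρ⁺ ∪ ρ⁻) \ {λ}} (t - c_μ)` satisfies `X(c_λ) ≠ 0`. -/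
theorem prod_luZhongEigenvalue_sub_ne_zero (ρ lam : YPartition)
    (hlam : lam ∈ addOneCell ρ ∪ removeOneCell ρ)
    (hfin : ((addOneCell ρ ∪ removeOneCell ρ) \ {lam}).Finite) :
    ∏ μ ∈ hfin.toFinset, (luZhongEigenvalue lam - luZhongEigenvalue μ) ≠ 0 := by
  rw [Finset.prod_ne_zero_iff]
  intro μ hμ
  rw [Set.Finite.mem_toFinset] at hμ
  obtain ⟨hμu, hμne⟩ := hμ
  have hne : lam ≠ μ := fun hh => hμne (by simp [hh.symm])
  exact sub_ne_zero_of_ne (eigen_ne hlam hμu hne)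
end

section
/- The map sending a partition λ to its content polynomial C_λ(t) = Σ_{x ∈ λ} t^{c(x)}, regarded as a Laurent polynomial in ℤ[t, t^{-1}], is injective: if C_λ = C_μ in ℤ[t, t^{-1}] then λ = μ. -/
open LaurentPolynomial

def YPcnt (p : YPartition) (c : ℤ) (M : ℕ) : ℕ :=
  ((Finset.range M).filter (fun i : ℕ => 0 ≤ c + (i : ℤ) ∧ c + (i : ℤ) < (p.parts i : ℤ))).card

private lemma YP_inner_sum (n i : ℕ) (c : ℤ) :
    (∑ j ∈ Finset.range n, if (j : ℤ) - i = c then (1 : ℤ) else 0) =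
      if 0 ≤ c + (i : ℤ) ∧ c + (i : ℤ) < (n : ℤ) then 1 else 0 := by
  by_cases h : 0 ≤ c + (i : ℤ) ∧ c + (i : ℤ) < n
  · rw [if_pos h, Finset.sum_eq_single ((c + i).toNat)]
    · rw [if_pos]; omega
    · intro j _ hj; rw [if_neg]; omega
    · intro hj; simp only [Finset.mem_range] at hj; omega
  · rw [if_neg h, Finset.sum_eq_zero]
    intro j hj; simp only [Finset.mem_range] at hj; rw [if_neg]; omega

private lemma YP_coeff_cnt (p : YPartition) {N : ℕ} (hN : ∀ n, N ≤ n → p.parts n = 0)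
    {M : ℕ} (hM : N ≤ M) (c : ℤ) :
    (contentPoly ℤ p 1).coeff c = (YPcnt p c M : ℤ) := by
  rw [contentPoly, finsum_eq_finset_sum_of_support_subset _ (s := Finset.range M) (by
    intro i hi
    simp only [Finset.coe_range, Set.mem_Iio]
    by_contra hMi
    apply hi
    show (∑ j ∈ Finset.range (p.parts i), T ((1:ℤ) * ((j : ℤ) - (i : ℤ))) : LaurentPolynomial ℤ) = 0
    rw [hN i (by omega), Finset.range_zero, Finset.sum_empty])]
  rw [AddMonoidAlgebra.coeff_sum, Finset.sum_apply']
  simp only [one_mul]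
  have hterm : ∀ x : ℕ, ((∑ j ∈ Finset.range (p.parts x), T ((j : ℤ) - (x : ℤ)) :
      LaurentPolynomial ℤ)).coeff c
      = if 0 ≤ c + (x : ℤ) ∧ c + (x : ℤ) < (p.parts x : ℤ) then 1 else 0 := by
    intro x
    rw [AddMonoidAlgebra.coeff_sum, Finset.sum_apply']
    simp only [LaurentPolynomial.T_apply]
    exact YP_inner_sum _ _ _
  rw [Finset.sum_congr rfl (fun x _ => hterm x), YPcnt, Finset.card_filter, Nat.cast_sum]
  apply Finset.sum_congr rfl
  intro x _
  split <;> simp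

private lemma YP_char (p : YPartition) {N : ℕ} (hN : ∀ n, N ≤ n → p.parts n = 0) (c : ℤ)
    {M : ℕ} (hM : max N (-c).toNat ≤ M) (i : ℕ) :
    c < (p.parts i : ℤ) - i ↔ i < YPcnt p c M + (-c).toNat := by
  set t := (-c).toNat with ht
  have hgmono : ∀ j j' : ℕ, j ≤ j' → (p.parts j' : ℤ) - j' ≤ (p.parts j : ℤ) - j := by
    intro j j' hjj
    have := p.antitone' hjj
    omega
  have hwit : (p.parts (max N t) : ℤ) - (max N t) ≤ c := by
    rw [hN _ (le_max_left _ _)]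
    have h1 : (t : ℤ) ≤ (max N t : ℕ) := by exact_mod_cast le_max_right N t
    omega
  have hex : ∃ j : ℕ, (p.parts j : ℤ) - j ≤ c := ⟨_, hwit⟩
  have key1 : ∀ j, j < Nat.find hex ↔ c < (p.parts j : ℤ) - j := by
    intro j
    constructor
    · intro hj
      have := Nat.find_min hex hj
      omega
    · intro hj
      by_contra hjf
      push_neg at hjf
      have h1 := hgmono _ j hjf
      have h2 := Nat.find_spec hex
      omega
  have key2 : t ≤ Nat.find hex := by
    rw [Nat.le_find_iff]
    intro m hm
    have h1 : (m : ℤ) < t := by exact_mod_cast hm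
    omega
  have key3 : Nat.find hex ≤ M := le_trans (Nat.find_le hwit) hM
  have key4 : YPcnt p c M = Nat.find hex - t := by
    rw [YPcnt]
    have : (Finset.range M).filter (fun i : ℕ => 0 ≤ c + (i : ℤ) ∧ c + (i : ℤ) < (p.parts i : ℤ))
        = Finset.Ico t (Nat.find hex) := by
      ext j
      simp only [Finset.mem_filter, Finset.mem_range, Finset.mem_Ico]
      constructor
      · rintro ⟨hjM, hj0, hjp⟩
        have := (key1 j).2 (by omega)
        constructor
        · omega
        · exact this
      · rintro ⟨htj, hjf⟩
        have h1 := (key1 j).1 hjf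
        refine ⟨by omega, by omega, by omega⟩
    rw [this, Nat.card_Ico]
  rw [key4, Nat.sub_add_cancel key2]
  exact (key1 i).symm
/-- The map sending a partition `λ` to its content polynomial
`C_λ(t) = ∑_{x ∈ λ} t^{c(x)}` in `ℤ[t, t⁻¹]` is injective: if `C_λ = C_μ`
in `ℤ[t, t⁻¹]` then `λ = μ`. -/
theorem partition_injective_contentPoly (p q : YPartition)
    (h : contentPoly ℤ p 1 = contentPoly ℤ q 1) : p = q := by
  obtain ⟨Np, hNp⟩ := p.eventually_zero
  obtain ⟨Nq, hNq⟩ := q.eventually_zero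
  have hparts : p.parts = q.parts := by
    funext i
    have hg : ∀ c : ℤ, (c < (p.parts i : ℤ) - i ↔ c < (q.parts i : ℤ) - i) := by
      intro c
      set M := max (max Np Nq) (-c).toNat with hM
      have hcnt : YPcnt p c M = YPcnt q c M := by
        have h1 := YP_coeff_cnt p hNp (M := M) (by omega) c
        have h2 := YP_coeff_cnt q hNq (M := M) (by omega) c
        have h3 : (contentPoly ℤ p 1).coeff c = (contentPoly ℤ q 1).coeff c := by rw [h]
        omega
      rw [YP_char p hNp c (M := M) (by omega) i, YP_char q hNq c (M := M) (by omega) i, hcnt]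
    have h1 := hg ((p.parts i : ℤ) - i - 1)
    have h2 := hg ((q.parts i : ℤ) - i - 1)
    omega
  cases p; cases q; cases hparts; rfl
end
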